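/- arXiv:1406.5263 — 9 statements merged into one kernel-verified Lean document; each statement's English description precedes it below -/
import Mathlib

section
/- For 0 ≤ a < 1 and N_t > 1, the largest eigenvalue of the N_t × N_t matrix R with entries R[i,j] = a^|i-j| satisfies λ_max(R) ≥ (1+a)/(1-a) − 2a(1 − a^(N_t))/(N_t (1−a)^2). -/
open Matrix Finset

noncomputable def expR (N : ℕ) (a : ℝ) : Matrix (Fin N) (Fin N) ℝ :=
  fun i j => a ^ (((i : ℤ) - (j : ℤ)).natAbs)

/-! The Rayleigh quotient of `expR N a` at the all-ones vector is `(∑ i j, a ^ |i - j|) / N`, and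
it is at most `λ_max` because `λ_max • 1 - expR N a` is positive semidefinite (spectral theorem). The double
sum is evaluated by adding one row and one column at a time: passing from `N` to `N + 1` adds
`1 + 2 (a + a² + ⋯ + a ^ N)`. -/

namespace Matrix.IsHermitian

open scoped ComplexOrder

variable {𝕜 n : Type*} [RCLike 𝕜] [Fintype n] [DecidableEq n] {A : Matrix n n 𝕜}

theorem posSemidef_smul_one_sub (hA : A.IsHermitian) {c : ℝ}
    (hc : ∀ i, hA.eigenvalues i ≤ c) : (c • 1 - A).PosSemidef := by
  set U : Matrix n n 𝕜 := (hA.eigenvectorUnitary : Matrix n n 𝕜)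
  have hUU : U * star U = 1 := Unitary.mul_star_self_of_mem hA.eigenvectorUnitary.2
  have hdiag : diagonal (fun i => ((c - hA.eigenvalues i : ℝ) : 𝕜)) =
      c • 1 - diagonal (RCLike.ofReal ∘ hA.eigenvalues) := by
    ext i j
    by_cases h : i = j <;> simp [h, diagonal, RCLike.real_smul_eq_coe_mul]
  have hdecomp : c • 1 - A = U * diagonal (fun i => ((c - hA.eigenvalues i : ℝ) : 𝕜)) * star U := by
    conv_lhs => rw [hA.spectral_theorem, Unitary.conjStarAlgAut_apply]
    rw [hdiag, mul_sub, sub_mul, mul_smul_comm, smul_mul_assoc, mul_one, hUU]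
  rw [hdecomp]
  exact (PosSemidef.diagonal fun i => by simpa using hc i).mul_mul_conjTranspose_same U

theorem dotProduct_mulVec_le_iSup_eigenvalues (hA : A.IsHermitian) (x : n → 𝕜) :
    star x ⬝ᵥ A *ᵥ x ≤ ((⨆ i, hA.eigenvalues i : ℝ) : 𝕜) * (star x ⬝ᵥ x) := by
  have h := (hA.posSemidef_smul_one_sub fun i =>
    le_ciSup (Set.finite_range hA.eigenvalues).bddAbove i).dotProduct_mulVec_nonneg x
  rwa [sub_mulVec, dotProduct_sub, smul_mulVec, one_mulVec, dotProduct_smul, sub_nonneg,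
    RCLike.real_smul_eq_coe_mul] at h

end Matrix.IsHermitian

theorem sum_range_pow_sub {R : Type*} [Semiring R] (a : R) (N : ℕ) :
    ∑ j ∈ range N, a ^ (N - j) = a * ∑ k ∈ range N, a ^ k := by
  rw [mul_sum, ← sum_range_reflect]
  refine sum_congr rfl fun j hj => ?_
  rw [← pow_succ']
  have := mem_range.mp hj
  congr 1
  omega

theorem one_sub_sq_mul_sum_pow_natAbs_sub {R : Type*} [CommRing R] (a : R) (N : ℕ) :
    (1 - a) ^ 2 * ∑ i ∈ range N, ∑ j ∈ range N, a ^ ((i : ℤ) - j).natAbs =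
      N * (1 - a ^ 2) - 2 * a * (1 - a ^ N) := by
  induction N with
  | zero => simp
  | succ N ih =>
    have hrow : ∑ j ∈ range N, a ^ ((N : ℤ) - j).natAbs = a * ∑ k ∈ range N, a ^ k := by
      rw [← sum_range_pow_sub]
      refine sum_congr rfl fun j hj => ?_
      have := mem_range.mp hj
      congr 1
      omega
    have hcol : ∑ i ∈ range N, a ^ ((i : ℤ) - N).natAbs = a * ∑ k ∈ range N, a ^ k := by
      rw [← hrow]
      refine sum_congr rfl fun j _ => ?_
      rw [← Int.natAbs_neg, neg_sub]
    simp only [sum_range_succ, sum_add_distrib, hrow, hcol, sub_self, Int.natAbs_zero, pow_zero]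
    push_cast
    linear_combination ih + 2 * a * (1 - a) * mul_neg_geom_sum a N

theorem sum_expR (N : ℕ) (a : ℝ) :
    ∑ i, ∑ j, expR N a i j = ∑ i ∈ range N, ∑ j ∈ range N, a ^ ((i : ℤ) - j).natAbs := by
  rw [← Fin.sum_univ_eq_sum_range]
  exact sum_congr rfl fun i _ =>
    Fin.sum_univ_eq_sum_range (fun j => a ^ (((i : ℕ) : ℤ) - j).natAbs) N

theorem stmt1_general (N : ℕ) (hN : 1 < N) (a : ℝ) (ha1 : a < 1)
    (hR : (expR N a).IsHermitian) :
    (1 + a) / (1 - a) - 2 * a * (1 - a ^ N) / (N * (1 - a) ^ 2) ≤ ⨆ i, hR.eigenvalues i := by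
  have hN0 : (0 : ℝ) < N := by positivity
  have ha : 1 - a ≠ 0 := by linarith
  have hsum : ∑ i, ∑ j, expR N a i j =
      (N * (1 - a ^ 2) - 2 * a * (1 - a ^ N)) / (1 - a) ^ 2 := by
    rw [sum_expR, ← one_sub_sq_mul_sum_pow_natAbs_sub]
    field_simp
  have hrayleigh := hR.dotProduct_mulVec_le_iSup_eigenvalues 1
  rw [star_one, one_dotProduct_one, Fintype.card_fin, one_dotProduct] at hrayleigh
  simp only [mulVec, dotProduct_one, RCLike.ofReal_real_eq_id, id] at hrayleigh
  calc (1 + a) / (1 - a) - 2 * a * (1 - a ^ N) / (N * (1 - a) ^ 2)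
      = (∑ i, ∑ j, expR N a i j) / N := by
        rw [hsum]
        field_simp
        ring
    _ ≤ ⨆ i, hR.eigenvalues i := (div_le_iff₀ hN0).mpr hrayleigh

theorem stmt1 (N : ℕ) (hN : 1 < N) (a : ℝ) (ha0 : 0 ≤ a) (ha1 : a < 1)
    (hR : (expR N a).IsHermitian) :
    (1 + a) / (1 - a) - 2 * a * (1 - a ^ N) / (N * (1 - a) ^ 2) ≤ ⨆ i, hR.eigenvalues i :=
  stmt1_general N hN a ha1 hR
end

section
/- For 0 ≤ a < 1 and N_t ≥ 1, the smallest eigenvalue of the N_t × N_t matrix R with R[i,j] = a^|i-j| satisfies λ_min(R) ≤ (1−a)/(1+a) + 2a(1 − (−a)^(N_t))/(N_t (1+a)^2). -/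
open Matrix Finset

/-!
The smallest eigenvalue of a Hermitian matrix is at most each of its Rayleigh quotients. Take the
alternating vector `v i = (-1)^i`: since `(-1)^(i+j) = (-1)^|i-j|`, the quadratic form of
`expR N a` at `v` is the sum of all entries of `expR N (-a)`, a double geometric sum equal to
`(N (1 - b²) - 2b (1 - bᴺ)) / (1 - b)²` at `b = -a`, while `‖v‖² = N`.
-/

open scoped ComplexOrder in
theorem Matrix.IsHermitian.posSemidef_sub_smul_one {n 𝕜 : Type*} [Fintype n] [DecidableEq n]
    [RCLike 𝕜] {A : Matrix n n 𝕜} (hA : A.IsHermitian) {c : ℝ} (hc : ∀ i, c ≤ hA.eigenvalues i) :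
    (A - (c : 𝕜) • 1).PosSemidef := by
  have hshift : A - (c : 𝕜) • 1 = Unitary.conjStarAlgAut 𝕜 _ hA.eigenvectorUnitary
      (diagonal (RCLike.ofReal ∘ hA.eigenvalues) - (c : 𝕜) • 1) := by
    conv_lhs => rw [hA.spectral_theorem]
    rw [map_sub, map_smul, map_one]
  rw [hshift, Unitary.conjStarAlgAut_apply, Unitary.isUnit_coe.posSemidef_star_right_conjugate_iff,
    ← diagonal_one, ← diagonal_smul, diagonal_sub, posSemidef_diagonal_iff]
  intro i
  simpa using hc i

open scoped ComplexOrder in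
theorem Matrix.IsHermitian.iInf_eigenvalues_mul_dotProduct_le {n 𝕜 : Type*} [Fintype n]
    [DecidableEq n] [RCLike 𝕜] {A : Matrix n n 𝕜} (hA : A.IsHermitian) (v : n → 𝕜) :
    ((⨅ i, hA.eigenvalues i : ℝ) : 𝕜) * (star v ⬝ᵥ v) ≤ star v ⬝ᵥ (A *ᵥ v) := by
  have hpsd := hA.posSemidef_sub_smul_one fun i ↦ ciInf_le (Set.finite_range _).bddBelow i
  have hnonneg := hpsd.dotProduct_mulVec_nonneg v
  rwa [sub_mulVec, smul_mulVec, one_mulVec, dotProduct_sub, dotProduct_smul, smul_eq_mul,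
    sub_nonneg] at hnonneg

theorem neg_one_pow_add_eq_neg_one_pow_natAbs_sub {R : Type*} [Ring R]
    (i j : ℕ) : (-1 : R) ^ (i + j) = (-1) ^ ((i : ℤ) - j).natAbs := by
  rw [neg_one_pow_eq_pow_mod_two, neg_one_pow_eq_pow_mod_two ((i : ℤ) - j).natAbs]
  congr 1
  omega

theorem alternating_dotProduct_expR_mulVec (N : ℕ) (a : ℝ) :
    (fun i : Fin N ↦ (-1 : ℝ) ^ (i : ℕ)) ⬝ᵥ (expR N a *ᵥ fun i ↦ (-1) ^ (i : ℕ))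
      = ∑ i, ∑ j, expR N (-a) i j := by
  simp only [dotProduct, mulVec, mul_sum]
  refine sum_congr rfl fun i _ ↦ sum_congr rfl fun j _ ↦ ?_
  rw [expR, expR, neg_pow a, ← neg_one_pow_add_eq_neg_one_pow_natAbs_sub, pow_add]
  ring

theorem sum_pow_natAbs_sub_mul_one_sub (b : ℝ) (N : ℕ) :
    (∑ i : Fin N, b ^ ((i : ℤ) - N).natAbs) * (1 - b) = b * (1 - b ^ N) := by
  have hreflect : ∑ i : Fin N, b ^ ((i : ℤ) - N).natAbs = b * ∑ k ∈ range N, b ^ k := by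
    rw [Fin.sum_univ_eq_sum_range (fun i ↦ b ^ ((i : ℤ) - N).natAbs), ← sum_range_reflect,
      mul_sum]
    refine sum_congr rfl fun k hk ↦ ?_
    rw [← pow_succ']
    congr 1
    simp only [mem_range] at hk
    omega
  rw [hreflect, mul_assoc, geom_sum_mul_neg]

theorem sum_expR_mul_one_sub_sq (N : ℕ) (b : ℝ) :
    (∑ i, ∑ j, expR N b i j) * (1 - b) ^ 2 = N * (1 + b) * (1 - b) - 2 * b * (1 - b ^ N) := by
  induction N with
  | zero => simp
  | succ n ih =>
    have hsplit : ∑ i, ∑ j, expR (n + 1) b i j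
        = ∑ i, ∑ j, expR n b i j + 2 * ∑ i : Fin n, b ^ ((i : ℤ) - n).natAbs + 1 := by
      have hsymm : ∀ i : Fin n, ((n : ℤ) - i).natAbs = ((i : ℤ) - n).natAbs := fun i ↦ by omega
      simp only [expR, Fin.sum_univ_castSucc, Fin.val_castSucc, Fin.val_last, sub_self,
        Int.natAbs_zero, pow_zero, sum_add_distrib, hsymm]
      ring
    rw [hsplit]
    push_cast
    linear_combination ih + 2 * (1 - b) * sum_pow_natAbs_sub_mul_one_sub b n

theorem stmt4_general (N : ℕ) (hN : 1 ≤ N) (a : ℝ) (ha0 : 0 ≤ a)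
    (hR : (expR N a).IsHermitian) :
    (⨅ i, hR.eigenvalues i) ≤ (1 - a) / (1 + a) + 2 * a * (1 - (-a) ^ N) / (N * (1 + a) ^ 2) := by
  set v : Fin N → ℝ := fun i ↦ (-1) ^ (i : ℕ)
  have hnorm : v ⬝ᵥ v = N := by simp [v, dotProduct, ← pow_add, ← two_mul]
  have hquad : v ⬝ᵥ (expR N a *ᵥ v) * (1 + a) ^ 2
      = N * (1 - a) * (1 + a) + 2 * a * (1 - (-a) ^ N) := by
    rw [alternating_dotProduct_expR_mulVec]
    linear_combination sum_expR_mul_one_sub_sq N (-a)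
  have hrayleigh : (⨅ i, hR.eigenvalues i) * N ≤ v ⬝ᵥ (expR N a *ᵥ v) := by
    simpa [hnorm] using hR.iInf_eigenvalues_mul_dotProduct_le v
  have hN0 : (0 : ℝ) < N := by exact_mod_cast hN
  have ha : 0 < 1 + a := by linarith
  calc (⨅ i, hR.eigenvalues i) ≤ v ⬝ᵥ (expR N a *ᵥ v) / N := (le_div_iff₀ hN0).mpr hrayleigh
    _ = _ := by
      field_simp
      linear_combination hquad

theorem stmt4 (N : ℕ) (hN : 1 ≤ N) (a : ℝ) (ha0 : 0 ≤ a) (ha1 : a < 1)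
    (hR : (expR N a).IsHermitian) :
    (⨅ i, hR.eigenvalues i) ≤ (1 - a) / (1 + a) + 2 * a * (1 - (-a) ^ N) / (N * (1 + a) ^ 2) :=
  stmt4_general N hN a ha0 hR
end

section
/- For 0 ≤ a < 1 and N_t ≥ 1, the Rayleigh quotient of R (with R[i,j] = a^|i-j|) at the normalized alternating vector f = (1/√N_t)(1, −1, 1, −1, ..., (−1)^(N_t−1)) equals (1−a)/(1+a) + 2a(1 − (−a)^(N_t))/(N_t (1+a)^2). -/
open Matrix Finset

/-! The sign vector turns `a ^ |i - j|` into `(-a) ^ |i - j|`, because `i + j` and `|i - j|` have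
the same parity. So the quadratic form is the sum of all entries of the Kac–Murdock–Szegő matrix
with parameter `b = -a`. Peeling off the last row and column, that sum grows by
`1 + 2 (b + b² + ⋯ + b^N)`, a geometric sum, and induction on `N` gives
`(1 - b)² ∑ᵢⱼ b^|i-j| = N (1 - b²) - 2 b (1 - b^N)`. -/

section KacMurdockSzego

variable {R : Type*} [CommRing R]

theorem neg_one_pow_mul_neg_one_pow_mul_pow_natAbs_sub (b : R) (i j : ℕ) :
    (-1 : R) ^ i * (-1) ^ j * b ^ ((i : ℤ) - j).natAbs = (-b) ^ ((i : ℤ) - j).natAbs := by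
  have hparity : i + j = ((i : ℤ) - j).natAbs + 2 * min i j := by omega
  rw [← pow_add, hparity, pow_add, pow_mul, neg_one_sq, one_pow, mul_one, neg_pow b]

theorem sum_range_pow_natAbs_sub_mul (b : R) (N : ℕ) :
    (∑ i ∈ range N, b ^ ((i : ℤ) - N).natAbs) * (1 - b) = b * (1 - b ^ N) := by
  have hreflect : ∑ i ∈ range N, b ^ ((i : ℤ) - N).natAbs = b * ∑ k ∈ range N, b ^ k := by
    rw [← sum_range_reflect, mul_sum]
    refine sum_congr rfl fun k hk => ?_
    rw [← pow_succ']
    congr 1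
    have := mem_range.mp hk
    omega
  rw [hreflect, mul_assoc, mul_comm _ (1 - b), mul_neg_geom_sum]

theorem sum_range_sum_range_pow_natAbs_sub_mul_sq (b : R) (N : ℕ) :
    (∑ i ∈ range N, ∑ j ∈ range N, b ^ ((i : ℤ) - j).natAbs) * (1 - b) ^ 2 =
      N * (1 - b ^ 2) - 2 * b * (1 - b ^ N) := by
  induction N with
  | zero => simp
  | succ N ih =>
    have hsymm : ∑ j ∈ range N, b ^ ((N : ℤ) - j).natAbs =
        ∑ i ∈ range N, b ^ ((i : ℤ) - N).natAbs :=
      sum_congr rfl fun j _ => by congr 1; omega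
    have hsplit : ∑ i ∈ range (N + 1), ∑ j ∈ range (N + 1), b ^ ((i : ℤ) - j).natAbs =
        ∑ i ∈ range N, ∑ j ∈ range N, b ^ ((i : ℤ) - j).natAbs +
          2 * ∑ i ∈ range N, b ^ ((i : ℤ) - N).natAbs + 1 := by
      simp only [sum_range_succ, sum_add_distrib, hsymm,
        sub_self, Int.natAbs_zero, pow_zero]
      ring
    rw [hsplit]
    push_cast
    linear_combination ih + 2 * (1 - b) * sum_range_pow_natAbs_sub_mul b N

end KacMurdockSzego

theorem neg_one_pow_mul_neg_one_pow_mul_expR (N : ℕ) (a : ℝ) (i j : Fin N) :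
    (-1 : ℝ) ^ (i : ℕ) * (-1) ^ (j : ℕ) * expR N a i j = (-a) ^ ((i : ℤ) - j).natAbs :=
  neg_one_pow_mul_neg_one_pow_mul_pow_natAbs_sub a i j

theorem stmt5_general (N : ℕ) (hN : 1 ≤ N) (a : ℝ) (ha0 : 0 ≤ a) :
    (∑ i : Fin N, ∑ j : Fin N, (-1 : ℝ) ^ (i : ℕ) * (-1 : ℝ) ^ (j : ℕ) * expR N a i j) / N =
      (1 - a) / (1 + a) + 2 * a * (1 - (-a) ^ N) / (N * (1 + a) ^ 2) := by
  have hform : ∑ i : Fin N, ∑ j : Fin N, (-1 : ℝ) ^ (i : ℕ) * (-1 : ℝ) ^ (j : ℕ) * expR N a i j =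
      ∑ i ∈ range N, ∑ j ∈ range N, (-a) ^ ((i : ℤ) - j).natAbs := by
    simp only [neg_one_pow_mul_neg_one_pow_mul_expR]
    rw [Fin.sum_univ_eq_sum_range (fun i => ∑ j : Fin N, (-a) ^ ((i : ℤ) - j).natAbs)]
    exact sum_congr rfl fun i _ =>
      Fin.sum_univ_eq_sum_range (fun j => (-a) ^ ((i : ℤ) - j).natAbs) N
  have hN' : (N : ℝ) ≠ 0 := by positivity
  have ha : 1 + a ≠ 0 := by positivity
  rw [hform]
  field_simp
  linear_combination sum_range_sum_range_pow_natAbs_sub_mul_sq (-a) N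

theorem stmt5 (N : ℕ) (hN : 1 ≤ N) (a : ℝ) (ha0 : 0 ≤ a) (ha1 : a < 1) :
    (∑ i : Fin N, ∑ j : Fin N, (-1 : ℝ) ^ (i : ℕ) * (-1 : ℝ) ^ (j : ℕ) * expR N a i j) / N =
      (1 - a) / (1 + a) + 2 * a * (1 - (-a) ^ N) / (N * (1 + a) ^ 2) :=
  stmt5_general N hN a ha0
end

section
/- Define the gap g(a) = (1+a)(1 − a^(N−1))/(1−a) − [(1+a)/(1−a) − 2a(1 − a^N)/(N(1−a)^2)] for 0 ≤ a < 1 and fixed integer N > 1. Then g is monotonically increasing in a on [0,1). -/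
/-!
Clearing denominators, `N (1 - a)² g(a) = 2a - N a^(N-1) + (N - 2) a^(N+1)`, and for `N = n + 2`
this is `(1 - a)²` times `∑_{m ≤ n} 2m a^m + n a^(n+1)`. So on `[0, 1)` the gap is a polynomial
with nonnegative coefficients, divided by `N`, and such a polynomial is monotone on `[0, ∞)`.
-/

open Finset

def gapPolynomial {R : Type*} [CommRing R] (n : ℕ) (a : R) : R :=
  ∑ m ∈ range (n + 1), 2 * (m : R) * a ^ m + n * a ^ (n + 1)

theorem one_sub_sq_mul_gapPolynomial {R : Type*} [CommRing R] (n : ℕ) (a : R) :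
    (1 - a) ^ 2 * gapPolynomial n a = 2 * a - (n + 2) * a ^ (n + 1) + n * a ^ (n + 3) := by
  induction n with
  | zero => simp [gapPolynomial]
  | succ k ih =>
    rw [gapPolynomial, sum_range_succ]
    rw [gapPolynomial] at ih
    push_cast at ih ⊢
    linear_combination ih

theorem monotoneOn_gapPolynomial_div (n : ℕ) :
    MonotoneOn (fun a : ℝ => gapPolynomial n a / (n + 2)) (Set.Ici 0) := by
  intro a ha b _ hab
  simp only [gapPolynomial]
  gcongr

theorem gap_eq_gapPolynomial_div (n : ℕ) {a : ℝ} (ha : a ≠ 1) :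
    (1 + a) * (1 - a ^ (n + 1)) / (1 - a) -
        ((1 + a) / (1 - a) - 2 * a * (1 - a ^ (n + 2)) / ((n + 2 : ℕ) * (1 - a) ^ 2)) =
      gapPolynomial n a / (n + 2) := by
  have h1 : (1 : ℝ) - a ≠ 0 := sub_ne_zero.mpr ha.symm
  push_cast
  field_simp
  linear_combination -one_sub_sq_mul_gapPolynomial n a

theorem stmt8 (N : ℕ) (hN : 1 < N) :
    MonotoneOn
      (fun a : ℝ =>
        (1 + a) * (1 - a ^ (N - 1)) / (1 - a) -
          ((1 + a) / (1 - a) - 2 * a * (1 - a ^ N) / (N * (1 - a) ^ 2)))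
      (Set.Ico (0 : ℝ) 1) := by
  obtain ⟨n, rfl⟩ : ∃ n, N = n + 2 := ⟨N - 2, by omega⟩
  exact ((monotoneOn_gapPolynomial_div n).mono Set.Ico_subset_Ici_self).congr
    fun a ha => (gap_eq_gapPolynomial_div n ha.2.ne).symm
end

section
/- For 0 ≤ a < 1 and N ≥ 1, every eigenvalue λ of the N × N matrix R with R[i,j] = a^|i-j| satisfies (1−a)/(1+a) ≤ λ ≤ (1+a)/(1−a). -/
open Matrix Finset

/-!
The inverse of `R` is, up to the factor `1 - a²`, the Gram matrix of the innovations
`u₀ √(1 - a²), u₁ - a u₀, …, u_{N-1} - a u_{N-2}` of an AR(1) process: for `y = R u`,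
`∑ (u_{k+1} - a u_k)(y_{k+1} - a y_k) + (1 - a²) u₀ y₀ = (1 - a²) ‖u‖²`.
For an eigenvector this reads `λ Q(u) = (1 - a²) ‖u‖²`, where `Q(u)` is the innovation energy,
and `2 |u_{k+1} u_k| ≤ u_{k+1}² + u_k²` confines `Q(u)` between `(1 - a)² ‖u‖²` and
`(1 + a)² ‖u‖²`.
-/

namespace ExpCorrelation

variable (a : ℝ) (N : ℕ)

noncomputable def kernelApply (w : ℕ → ℝ) (k : ℕ) : ℝ :=
  ∑ j ∈ range N, a ^ ((k : ℤ) - j).natAbs * w j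

def innovationForm (u y : ℕ → ℝ) : ℝ :=
  ∑ k ∈ range (N - 1), (u (k + 1) - a * u k) * (y (k + 1) - a * y k)
    + (1 - a ^ 2) * (u 0 * y 0)

variable {a N}

/-- The column differences `a^|k+1-j| - a a^|k-j|` vanish for `k ≥ j` and equal
`(1 - a²) a^(j-k-1)` for `k < j`, so the sum telescopes. -/
lemma sum_innovation_mul_kernel_innovation {j : ℕ} (hj : j < N) (u : ℕ → ℝ) :
    ∑ k ∈ range (N - 1), (u (k + 1) - a * u k) *
      (a ^ (((k + 1 : ℕ) : ℤ) - j).natAbs - a * a ^ ((k : ℤ) - j).natAbs)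
      = (1 - a ^ 2) * (u j - a ^ j * u 0) := by
  have hsub : range j ⊆ range (N - 1) := range_subset_range.2 (by omega)
  rw [← sum_subset hsub fun k hk hkj => ?_]
  · have hterm : ∀ k ∈ range j, (u (k + 1) - a * u k) *
          (a ^ (((k + 1 : ℕ) : ℤ) - j).natAbs - a * a ^ ((k : ℤ) - j).natAbs)
          = (1 - a ^ 2) * (a ^ (j - (k + 1)) * u (k + 1) - a ^ (j - k) * u k) := by
      intro k hk
      have hkj : k < j := mem_range.1 hk
      rw [show (((k + 1 : ℕ) : ℤ) - j).natAbs = j - (k + 1) by omega,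
        show ((k : ℤ) - j).natAbs = j - (k + 1) + 1 by omega, pow_succ,
        show j - k = j - (k + 1) + 1 by omega, pow_succ]
      ring
    rw [sum_congr rfl hterm, ← mul_sum, sum_range_sub (fun k => a ^ (j - k) * u k)]
    simp
  · have hjk : j ≤ k := by simpa using hkj
    rw [show (((k + 1 : ℕ) : ℤ) - j).natAbs = k - j + 1 by omega,
      show ((k : ℤ) - j).natAbs = k - j by omega, pow_succ]
    ring

theorem innovationForm_kernelApply (u w : ℕ → ℝ) :
    innovationForm a N u (kernelApply a N w) = (1 - a ^ 2) * ∑ j ∈ range N, u j * w j := by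
  have hcol : ∀ k, kernelApply a N w (k + 1) - a * kernelApply a N w k
      = ∑ j ∈ range N,
          (a ^ (((k + 1 : ℕ) : ℤ) - j).natAbs - a * a ^ ((k : ℤ) - j).natAbs) * w j := by
    intro k
    simp only [kernelApply, mul_sum, ← sum_sub_distrib]
    exact sum_congr rfl fun j _ => by ring
  have hhead : kernelApply a N w 0 = ∑ j ∈ range N, a ^ j * w j :=
    sum_congr rfl fun j _ => by rw [show ((0 : ℕ) - (j : ℤ)).natAbs = j by omega]
  calc innovationForm a N u (kernelApply a N w)
      = ∑ j ∈ range N, (∑ k ∈ range (N - 1), (u (k + 1) - a * u k) *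
          (a ^ (((k + 1 : ℕ) : ℤ) - j).natAbs - a * a ^ ((k : ℤ) - j).natAbs)) * w j
        + (1 - a ^ 2) * (u 0 * ∑ j ∈ range N, a ^ j * w j) := by
        simp only [innovationForm, hcol, hhead, mul_sum, sum_mul]
        rw [sum_comm]
        congr 1
        exact sum_congr rfl fun j _ => sum_congr rfl fun k _ => by ring
    _ = (1 - a ^ 2) * ∑ j ∈ range N, u j * w j := by
        rw [sum_congr rfl fun j hj => by rw [sum_innovation_mul_kernel_innovation (mem_range.1 hj)]]
        simp only [mul_sum, ← sum_add_distrib]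
        exact sum_congr rfl fun j _ => by ring

lemma innovationForm_congr_right (hN : 0 < N) {u y z : ℕ → ℝ} (h : ∀ k < N, y k = z k) :
    innovationForm a N u y = innovationForm a N u z := by
  unfold innovationForm
  rw [h 0 hN]
  congr 1
  refine sum_congr rfl fun k hk => ?_
  have hk : k < N - 1 := mem_range.1 hk
  rw [h k (by omega), h (k + 1) (by omega)]

lemma innovationForm_smul_right (u y : ℕ → ℝ) (μ : ℝ) :
    innovationForm a N u (μ • y) = μ * innovationForm a N u y := by
  simp only [innovationForm, Pi.smul_apply, smul_eq_mul, mul_add, mul_sum]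
  congr 1
  · exact sum_congr rfl fun k _ => by ring
  · ring

theorem innovationForm_self_bounds (ha0 : 0 ≤ a) (ha1 : a ≤ 1) (hN : 0 < N) (u : ℕ → ℝ) :
    (1 - a) ^ 2 * ∑ j ∈ range N, u j ^ 2 ≤ innovationForm a N u u ∧
      innovationForm a N u u ≤ (1 + a) ^ 2 * ∑ j ∈ range N, u j ^ 2 := by
  set S := ∑ j ∈ range N, u j ^ 2
  have hshift : ∑ k ∈ range (N - 1), u (k + 1) ^ 2 = S - u 0 ^ 2 := by
    rw [eq_sub_iff_add_eq, ← sum_range_succ' (fun j => u j ^ 2) (N - 1), Nat.sub_add_cancel hN]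
  have hinit : ∑ k ∈ range (N - 1), u k ^ 2 ≤ S :=
    sum_le_sum_of_subset_of_nonneg (range_subset_range.2 (by omega)) fun _ _ _ => sq_nonneg _
  have hupper : ∑ k ∈ range (N - 1), (u (k + 1) - a * u k) * (u (k + 1) - a * u k)
      ≤ (1 + a) * ∑ k ∈ range (N - 1), u (k + 1) ^ 2
        + a * (1 + a) * ∑ k ∈ range (N - 1), u k ^ 2 := by
    rw [mul_sum, mul_sum, ← sum_add_distrib]
    exact sum_le_sum fun k _ => by nlinarith [sq_nonneg (u (k + 1) + u k)]
  have hlower : (1 - a) * ∑ k ∈ range (N - 1), u (k + 1) ^ 2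
        - a * (1 - a) * ∑ k ∈ range (N - 1), u k ^ 2
      ≤ ∑ k ∈ range (N - 1), (u (k + 1) - a * u k) * (u (k + 1) - a * u k) := by
    rw [mul_sum, mul_sum, ← sum_sub_distrib]
    exact sum_le_sum fun k _ => by nlinarith [sq_nonneg (u (k + 1) - u k)]
  have ha : 0 ≤ a * (1 - a) := mul_nonneg ha0 (by linarith)
  unfold innovationForm
  rw [hshift] at hupper hlower
  constructor
  · nlinarith [mul_le_mul_of_nonneg_left hinit ha, mul_nonneg ha (sq_nonneg (u 0))]
  · have ha' : 0 ≤ a * (1 + a) := by positivity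
    nlinarith [mul_le_mul_of_nonneg_left hinit ha', mul_nonneg ha0 (sq_nonneg (u 0))]

def zeroExtend (v : Fin N → ℝ) (j : ℕ) : ℝ :=
  if h : j < N then v ⟨j, h⟩ else 0

lemma kernelApply_zeroExtend (v : Fin N → ℝ) {k : ℕ} (hk : k < N) :
    kernelApply a N (zeroExtend v) k = (expR N a *ᵥ v) ⟨k, hk⟩ := by
  rw [kernelApply, ← Fin.sum_univ_eq_sum_range]
  simp [zeroExtend, mulVec, dotProduct, expR]

lemma sum_range_zeroExtend_sq (v : Fin N → ℝ) : ∑ j ∈ range N, zeroExtend v j ^ 2 = v ⬝ᵥ v := by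
  rw [← Fin.sum_univ_eq_sum_range]
  simp [zeroExtend, dotProduct, sq]

theorem expR_eigenvalue_bounds (ha0 : 0 ≤ a) (ha1 : a < 1) {μ : ℝ} {v : Fin N → ℝ}
    (hv0 : v ≠ 0) (hv : expR N a *ᵥ v = μ • v) :
    (1 - a) / (1 + a) ≤ μ ∧ μ ≤ (1 + a) / (1 - a) := by
  have hN : 0 < N := Nat.pos_of_ne_zero fun h => hv0 (by subst h; exact Subsingleton.elim _ _)
  set u := zeroExtend v
  set S := ∑ j ∈ range N, u j ^ 2
  have hS : 0 < S := by
    rw [show S = v ⬝ᵥ v from sum_range_zeroExtend_sq v]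
    exact (dotProduct_self_star_nonneg v).lt_of_ne fun h => hv0 (dotProduct_self_eq_zero.1 h.symm)
  have hRu : ∀ k < N, kernelApply a N u k = (μ • u) k := fun k hk => by
    simp [u, zeroExtend, kernelApply_zeroExtend v hk, hv, hk]
  have hrayleigh : μ * innovationForm a N u u = (1 - a ^ 2) * S := by
    rw [← innovationForm_smul_right, ← innovationForm_congr_right hN hRu,
      innovationForm_kernelApply]
    simp only [S, sq]
  obtain ⟨hlow, hup⟩ := innovationForm_self_bounds ha0 ha1.le hN u
  have h1a : 0 < 1 - a := by linarith
  have hQ : 0 < innovationForm a N u u := lt_of_lt_of_le (by positivity) hlow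
  have hμ : 0 < μ := by
    have h1a2 : 0 < 1 - a ^ 2 := by nlinarith
    exact pos_of_mul_pos_left (hrayleigh ▸ mul_pos h1a2 hS) hQ.le
  constructor
  · rw [div_le_iff₀ (by linarith)]
    nlinarith [mul_le_mul_of_nonneg_left hup hμ.le]
  · rw [le_div_iff₀ h1a]
    nlinarith [mul_le_mul_of_nonneg_left hlow hμ.le]

end ExpCorrelation

theorem stmt12_general (N : ℕ) (a : ℝ) (ha0 : 0 ≤ a) (ha1 : a < 1)
    (hR : (expR N a).IsHermitian) (i : Fin N) :
    (1 - a) / (1 + a) ≤ hR.eigenvalues i ∧ hR.eigenvalues i ≤ (1 + a) / (1 - a) :=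
  ExpCorrelation.expR_eigenvalue_bounds ha0 ha1
    (by simpa using hR.eigenvectorBasis.orthonormal.ne_zero i) (hR.mulVec_eigenvectorBasis i)

theorem stmt12 (N : ℕ) (hN : 1 ≤ N) (a : ℝ) (ha0 : 0 ≤ a) (ha1 : a < 1)
    (hR : (expR N a).IsHermitian) (i : Fin N) :
    (1 - a) / (1 + a) ≤ hR.eigenvalues i ∧ hR.eigenvalues i ≤ (1 + a) / (1 - a) :=
  stmt12_general N a ha0 ha1 hR i
end

section
/- For 0 ≤ a < 1, the N × N matrix R with entries R[i,j] = a^|i-j| is positive definite. -/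
open Matrix Finset

/-!
Let `T = 1 - a • S`, where `S` is the superdiagonal shift, so that `T * M` replaces row `i` of `M`
by row `i` minus `a` times row `i + 1`. Applied to `R = expR N a` this kills everything above the
diagonal and leaves `(1 - a ^ 2) * a ^ (i - j)` below it (`a ^ (i - j)` in the last row); the same
operation on columns then kills everything below the diagonal, so `T * R * Tᵀ` is diagonal with
entries `1 - a ^ 2` and a final `1`. As `T` is unitriangular, `R` is congruent to this positive
diagonal matrix.
-/

namespace Matrix

variable {R : Type*} {N : ℕ}

variable (R) in
def superdiagShift [Zero R] [One R] (N : ℕ) : Matrix (Fin N) (Fin N) R :=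
  of fun i j => if (j : ℕ) = i + 1 then 1 else 0

section Semiring

variable [NonAssocSemiring R]

lemma superdiagShift_mul_apply (M : Matrix (Fin N) (Fin N) R) (i j : Fin N) :
    (superdiagShift R N * M) i j =
      if h : (i : ℕ) + 1 < N then M ⟨i + 1, h⟩ j else 0 := by
  split_ifs with h
  · rw [mul_apply, Fintype.sum_eq_single ⟨i + 1, h⟩ fun k hk => ?_]
    · simp [superdiagShift]
    · have : (k : ℕ) ≠ i + 1 := fun hk' => hk (Fin.ext hk')
      simp [superdiagShift, this]
  · refine (mul_apply ..).trans (Fintype.sum_eq_zero _ fun k => ?_)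
    have : (k : ℕ) ≠ i + 1 := by omega
    simp [superdiagShift, this]

end Semiring

variable [CommRing R] (a : R)

lemma one_sub_smul_superdiagShift_mul_apply (M : Matrix (Fin N) (Fin N) R) (i j : Fin N) :
    ((1 - a • superdiagShift R N) * M) i j =
      M i j - a * if h : (i : ℕ) + 1 < N then M ⟨i + 1, h⟩ j else 0 := by
  rw [sub_mul, one_mul, smul_mul_assoc, sub_apply, smul_apply, superdiagShift_mul_apply,
    smul_eq_mul]

lemma mul_one_sub_smul_superdiagShift_transpose_apply (M : Matrix (Fin N) (Fin N) R)
    (i j : Fin N) :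
    (M * (1 - a • superdiagShift R N : Matrix (Fin N) (Fin N) R)ᵀ) i j =
      M i j - a * if h : (j : ℕ) + 1 < N then M i ⟨j + 1, h⟩ else 0 := by
  rw [← transpose_apply (M * _), transpose_mul, transpose_transpose,
    one_sub_smul_superdiagShift_mul_apply]
  rfl

lemma det_one_sub_smul_superdiagShift : (1 - a • superdiagShift R N).det = 1 := by
  have hupper : (1 - a • superdiagShift R N).IsUpperTriangular := fun i j (hji : j < i) => by
    have : (j : ℕ) ≠ i + 1 := by rw [Fin.lt_def] at hji; omega
    simp [superdiagShift, one_apply_ne hji.ne', this]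
  rw [det_of_isUpperTriangular hupper]
  exact Finset.prod_eq_one fun i _ => by simp [superdiagShift]

end Matrix

variable {N : ℕ} {a : ℝ}

def expRPivot (N : ℕ) (a : ℝ) (i : Fin N) : ℝ := if (i : ℕ) + 1 < N then 1 - a ^ 2 else 1

lemma expRPivot_pos (ha : |a| < 1) (i : Fin N) : 0 < expRPivot N a i := by
  have : a ^ 2 < 1 := by rwa [sq_lt_one_iff_abs_lt_one]
  unfold expRPivot
  split_ifs <;> linarith

lemma expR_apply_of_le {i j : Fin N} (h : (j : ℕ) ≤ i) : expR N a i j = a ^ ((i : ℕ) - j) := by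
  rw [expR]; congr 1; omega

lemma expR_apply_comm (i j : Fin N) : expR N a i j = expR N a j i := by
  rw [expR, expR, ← Int.natAbs_neg, neg_sub]

lemma one_sub_smul_superdiagShift_mul_expR :
    (1 - a • superdiagShift ℝ N) * expR N a =
      of fun i j : Fin N => if (j : ℕ) ≤ i then expRPivot N a i * a ^ ((i : ℕ) - j) else 0 := by
  ext i j
  rw [one_sub_smul_superdiagShift_mul_apply, of_apply, expRPivot]
  by_cases hN : (i : ℕ) + 1 < N
  · rw [dif_pos hN, if_pos hN]
    by_cases hji : (j : ℕ) ≤ i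
    · rw [if_pos hji, expR_apply_of_le hji, expR_apply_of_le (i := ⟨i + 1, hN⟩) (by simp; omega)]
      rw [show (i : ℕ) + 1 - j = i - j + 1 by omega, pow_succ]
      ring
    · rw [if_neg hji, expR_apply_comm i j, expR_apply_of_le (by omega),
        expR_apply_comm ⟨i + 1, hN⟩ j, expR_apply_of_le (by simp; omega)]
      rw [show (j : ℕ) - i = j - (i + 1) + 1 by omega, pow_succ]
      ring
  · have hji : (j : ℕ) ≤ i := by omega
    rw [dif_neg hN, if_neg hN, if_pos hji, expR_apply_of_le hji]
    ring

lemma one_sub_smul_superdiagShift_mul_expR_mul_transpose :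
    (1 - a • superdiagShift ℝ N) * expR N a *
        (1 - a • superdiagShift ℝ N : Matrix (Fin N) (Fin N) ℝ)ᵀ =
      diagonal (expRPivot N a) := by
  ext i j
  rw [mul_one_sub_smul_superdiagShift_transpose_apply, one_sub_smul_superdiagShift_mul_expR]
  simp only [of_apply, diagonal_apply]
  rcases lt_trichotomy (j : ℕ) i with hji | hji | hij
  · have hj : (j : ℕ) + 1 < N := by omega
    rw [if_pos hji.le, dif_pos hj, if_pos (Nat.succ_le_of_lt hji),
      if_neg (Fin.ne_of_val_ne hji.ne'), show (i : ℕ) - j = i - (j + 1) + 1 by omega, pow_succ]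
    ring
  · obtain rfl := Fin.ext hji
    simp
  · have : ¬ (j : ℕ) + 1 ≤ i := by omega
    simp [hij.not_ge, this, Fin.ne_of_val_ne hij.ne]

theorem stmt13 (N : ℕ) (a : ℝ) (ha0 : 0 ≤ a) (ha1 : a < 1) :
    (expR N a).PosDef := by
  have hT : IsUnit (1 - a • superdiagShift ℝ N) := by
    rw [isUnit_iff_isUnit_det, det_one_sub_smul_superdiagShift]
    exact isUnit_one
  rw [← hT.posDef_star_right_conjugate_iff, star_eq_conjTranspose,
    conjTranspose_eq_transpose_of_trivial, one_sub_smul_superdiagShift_mul_expR_mul_transpose]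
  exact PosDef.diagonal (expRPivot_pos (abs_lt.2 ⟨by linarith, ha1⟩))
end

section
/- For 0 ≤ a < 1 and even N, Σ_{i,j=1}^{N} (−1)^(i+j) a^|i−j| = N − 2[Σ_{k=1}^{N/2} (N−(2k−1))a^(2k−1) − Σ_{k=1}^{N/2−1} (N−2k)a^(2k)], and this equals N·[(1−a)/(1+a) + 2a(1−a^N)/(N(1+a)^2)]. -/
/-!
Since `(-1) ^ (i + j) = (-1) ^ |i - j|`, the sum is the sum `S_N(x)` of all entries of the matrix
`(x ^ |i - j|)` at `x = -a`. Bordering the `N × N` matrix by one more row and column adds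
`1 + 2 (x + ⋯ + x ^ N)`. This recursion gives both the expansion along diagonals
`S_N(x) = N + 2 ∑_{d=1}^{N-1} (N - d) x ^ d`, whose odd and even terms are the two sums of the
first formula, and the closed form `(1 - x) ^ 2 S_N(x) = N (1 - x ^ 2) - 2 x (1 - x ^ N)`.
-/

open Matrix Finset

section PowNatAbsSub

variable {R : Type*} [CommRing R]

lemma neg_one_pow_add_mul_pow_natAbs_sub (a : R) (i j : ℕ) :
    (-1) ^ (i + j) * a ^ ((i : ℤ) - j).natAbs = (-a) ^ ((i : ℤ) - j).natAbs := by
  have h_parity : ∀ i d : ℕ, (-1 : R) ^ (i + (i + d)) = (-1) ^ d := fun i d => by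
    rw [show i + (i + d) = d + 2 * i by ring, pow_add, pow_mul, neg_one_sq, one_pow, mul_one]
  rw [neg_pow a]
  congr 1
  rcases le_total i j with h | h
  · obtain ⟨d, rfl⟩ := Nat.exists_eq_add_of_le h
    rw [h_parity, show ((i : ℤ) - ↑(i + d)).natAbs = d by omega]
  · obtain ⟨d, rfl⟩ := Nat.exists_eq_add_of_le h
    rw [add_comm, h_parity, show ((↑(j + d) : ℤ) - j).natAbs = d by omega]

lemma sum_range_pow_natAbs_sub_left (x : R) (N : ℕ) :
    ∑ j ∈ range N, x ^ ((N : ℤ) - j).natAbs = ∑ d ∈ Ico 1 (N + 1), x ^ d := by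
  have h_reflect := sum_Ico_reflect (fun d => x ^ d) 0 (Nat.le_succ N)
  simp only [Nat.add_sub_cancel_left, Nat.sub_zero] at h_reflect
  rw [range_eq_Ico, ← h_reflect]
  exact sum_congr rfl fun j hj => by
    rw [show ((N : ℤ) - j).natAbs = N - j by simp at hj; omega]

lemma sum_sum_pow_natAbs_sub_succ (x : R) (N : ℕ) :
    ∑ i ∈ range (N + 1), ∑ j ∈ range (N + 1), x ^ ((i : ℤ) - j).natAbs =
      ∑ i ∈ range N, ∑ j ∈ range N, x ^ ((i : ℤ) - j).natAbs + 1 +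
        2 * ∑ d ∈ Ico 1 (N + 1), x ^ d := by
  have h_column : ∑ i ∈ range N, x ^ ((i : ℤ) - N).natAbs = ∑ d ∈ Ico 1 (N + 1), x ^ d := by
    rw [← sum_range_pow_natAbs_sub_left]
    exact sum_congr rfl fun i _ => by rw [← Int.natAbs_neg, neg_sub]
  simp only [sum_range_succ, sum_add_distrib, h_column, sum_range_pow_natAbs_sub_left, sub_self,
    Int.natAbs_zero, pow_zero]
  ring

lemma sum_sum_pow_natAbs_sub (x : R) (N : ℕ) :
    ∑ i ∈ range N, ∑ j ∈ range N, x ^ ((i : ℤ) - j).natAbs =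
      N + 2 * ∑ d ∈ Ico 1 N, ((N : R) - d) * x ^ d := by
  induction N with
  | zero => simp
  | succ N ih =>
    have h_top :
        ∑ d ∈ Ico 1 (N + 1), ((N : R) - d) * x ^ d = ∑ d ∈ Ico 1 N, ((N : R) - d) * x ^ d := by
      cases N with
      | zero => simp
      | succ N => rw [sum_Ico_succ_top (by omega), sub_self, zero_mul, add_zero]
    have h_split : ∑ d ∈ Ico 1 (N + 1), (((N + 1 : ℕ) : R) - d) * x ^ d =
        ∑ d ∈ Ico 1 N, ((N : R) - d) * x ^ d + ∑ d ∈ Ico 1 (N + 1), x ^ d := by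
      rw [← h_top, ← sum_add_distrib]
      exact sum_congr rfl fun d _ => by push_cast; ring
    rw [sum_sum_pow_natAbs_sub_succ, ih, h_split]
    push_cast
    ring

lemma one_sub_sq_mul_sum_sum_pow_natAbs_sub (x : R) (N : ℕ) :
    (1 - x) ^ 2 * ∑ i ∈ range N, ∑ j ∈ range N, x ^ ((i : ℤ) - j).natAbs =
      N * (1 - x ^ 2) - 2 * x * (1 - x ^ N) := by
  induction N with
  | zero => simp
  | succ N ih =>
    have h_geom := geom_sum_Ico_mul_neg x (show 1 ≤ N + 1 by omega)
    rw [sum_sum_pow_natAbs_sub_succ]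
    push_cast
    linear_combination ih + 2 * (1 - x) * h_geom

end PowNatAbsSub

lemma sum_Ico_one_two_mul {M : Type*} [AddCommMonoid M] (g : ℕ → M) (m : ℕ) :
    ∑ d ∈ Ico 1 (2 * m), g d = ∑ k ∈ Icc 1 m, g (2 * k - 1) + ∑ k ∈ Icc 1 (m - 1), g (2 * k) := by
  induction m with
  | zero => simp
  | succ m ih =>
    cases m with
    | zero => simp
    | succ m =>
      have h_odd := sum_Icc_succ_top (show 1 ≤ m + 1 + 1 by omega) fun k => g (2 * k - 1)
      have h_even := sum_Icc_succ_top (show 1 ≤ m + 1 by omega) fun k => g (2 * k)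
      rw [show 2 * (m + 1 + 1) = 2 * (m + 1) + 1 + 1 by ring, sum_Ico_succ_top (by omega),
        sum_Ico_succ_top (by omega), ih, h_odd, Nat.add_sub_cancel, Nat.add_sub_cancel, h_even,
        show 2 * (m + 1 + 1) - 1 = 2 * (m + 1) + 1 by omega]
      abel

theorem stmt16_general (N : ℕ) (hN : Even N) (hN0 : 0 < N) (a : ℝ) (ha0 : 0 ≤ a) :
    (∑ i : Fin N, ∑ j : Fin N, (-1 : ℝ) ^ ((i : ℕ) + (j : ℕ)) * expR N a i j) =
        N - 2 * ((∑ k ∈ Finset.Icc 1 (N / 2), ((N : ℝ) - (2 * k - 1)) * a ^ (2 * k - 1)) -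
          ∑ k ∈ Finset.Icc 1 (N / 2 - 1), ((N : ℝ) - 2 * k) * a ^ (2 * k)) ∧
      (∑ i : Fin N, ∑ j : Fin N, (-1 : ℝ) ^ ((i : ℕ) + (j : ℕ)) * expR N a i j) =
        N * ((1 - a) / (1 + a) + 2 * a * (1 - a ^ N) / (N * (1 + a) ^ 2)) := by
  have h_toeplitz : (∑ i : Fin N, ∑ j : Fin N, (-1 : ℝ) ^ ((i : ℕ) + (j : ℕ)) * expR N a i j) =
      ∑ i ∈ range N, ∑ j ∈ range N, (-a) ^ ((i : ℤ) - j).natAbs := by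
    simp only [expR, neg_one_pow_add_mul_pow_natAbs_sub]
    rw [← Fin.sum_univ_eq_sum_range]
    exact Fintype.sum_congr _ _ fun i =>
      Fin.sum_univ_eq_sum_range (fun j => (-a) ^ ((i : ℤ) - j).natAbs) N
  rw [h_toeplitz]
  obtain ⟨m, rfl⟩ := hN.two_dvd
  refine ⟨?_, ?_⟩
  · have h_odd : ∑ k ∈ Icc 1 m, (((2 * m : ℕ) : ℝ) - ((2 * k - 1 : ℕ) : ℝ)) * (-a) ^ (2 * k - 1) =
        -∑ k ∈ Icc 1 m, (((2 * m : ℕ) : ℝ) - (2 * k - 1)) * a ^ (2 * k - 1) := by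
      rw [← sum_neg_distrib]
      refine sum_congr rfl fun k hk => ?_
      have hk1 : 1 ≤ 2 * k := by simp at hk; omega
      rw [Odd.neg_pow (Nat.Even.sub_odd hk1 (even_two_mul k) odd_one), Nat.cast_sub hk1]
      push_cast
      ring
    have h_even : ∑ k ∈ Icc 1 (m - 1), (((2 * m : ℕ) : ℝ) - ((2 * k : ℕ) : ℝ)) * (-a) ^ (2 * k) =
        ∑ k ∈ Icc 1 (m - 1), (((2 * m : ℕ) : ℝ) - 2 * k) * a ^ (2 * k) := by
      refine sum_congr rfl fun k _ => ?_
      rw [(even_two_mul k).neg_pow]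
      push_cast
      ring
    rw [sum_sum_pow_natAbs_sub, sum_Ico_one_two_mul, h_odd, h_even,
      Nat.mul_div_cancel_left m two_pos]
    ring
  · have h_closed := one_sub_sq_mul_sum_sum_pow_natAbs_sub (-a) (2 * m)
    rw [(even_two_mul m).neg_pow] at h_closed
    have h_pos : (0 : ℝ) < 1 + a := by linarith
    have h_ne : ((2 * m : ℕ) : ℝ) ≠ 0 := by positivity
    field_simp
    linear_combination h_closed

theorem stmt16 (N : ℕ) (hN : Even N) (hN0 : 0 < N) (a : ℝ) (ha0 : 0 ≤ a) (ha1 : a < 1) :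
    (∑ i : Fin N, ∑ j : Fin N, (-1 : ℝ) ^ ((i : ℕ) + (j : ℕ)) * expR N a i j) =
        N - 2 * ((∑ k ∈ Finset.Icc 1 (N / 2), ((N : ℝ) - (2 * k - 1)) * a ^ (2 * k - 1)) -
          ∑ k ∈ Finset.Icc 1 (N / 2 - 1), ((N : ℝ) - 2 * k) * a ^ (2 * k)) ∧
      (∑ i : Fin N, ∑ j : Fin N, (-1 : ℝ) ^ ((i : ℕ) + (j : ℕ)) * expR N a i j) =
        N * ((1 - a) / (1 + a) + 2 * a * (1 - a ^ N) / (N * (1 + a) ^ 2)) :=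
  stmt16_general N hN hN0 a ha0
end

section
/- For 0 ≤ a < 1 and N > 1, λ_max(R) − λ_min(R) ≥ (1+a)/(1−a) − 2a(1−a^N)/(N(1−a)^2) − (1−a)/(1+a) − 2a(1−(−a)^N)/(N(1+a)^2), where R is the N × N matrix with R[i,j] = a^|i-j|. -/
/-!
Test the Rayleigh quotient `x ⬝ᵥ R x / x ⬝ᵥ x` on two vectors: the all-ones vector bounds `λ_max`
from below, and the alternating vector `((-1)^i)` bounds `λ_min` from above. Conjugating by
`diag((-1)^i)` turns `R(a)` into `R(-a)`, so both Rayleigh quotients are `N⁻¹ ∑_{i,j} b^|i-j|` for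
`b = ±a`, which sums in closed form.
-/

open Matrix Finset

open scoped MatrixOrder

namespace Matrix

variable {n : Type*} [Fintype n]

lemma dotProduct_mulVec_le_of_le {A B : Matrix n n ℝ} (h : A ≤ B) (x : n → ℝ) :
    x ⬝ᵥ A *ᵥ x ≤ x ⬝ᵥ B *ᵥ x := by
  have := (le_iff.mp h).dotProduct_mulVec_nonneg x
  rw [star_trivial, sub_mulVec, dotProduct_sub] at this
  linarith

variable [DecidableEq n]

lemma dotProduct_algebraMap_mulVec (c : ℝ) (x : n → ℝ) :
    x ⬝ᵥ algebraMap ℝ (Matrix n n ℝ) c *ᵥ x = c * (x ⬝ᵥ x) := by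
  rw [Algebra.algebraMap_eq_smul_one, smul_mulVec, one_mulVec, dotProduct_smul, smul_eq_mul]

namespace IsHermitian

variable {A : Matrix n n ℝ}

lemma algebraMap_iInf_eigenvalues_le (hA : A.IsHermitian) :
    algebraMap ℝ (Matrix n n ℝ) (⨅ i, hA.eigenvalues i) ≤ A := by
  rw [algebraMap_le_iff_le_spectrum hA.isSelfAdjoint, hA.spectrum_real_eq_range_eigenvalues]
  rintro _ ⟨i, rfl⟩
  exact ciInf_le (Set.finite_range _).bddBelow i

lemma le_algebraMap_iSup_eigenvalues (hA : A.IsHermitian) :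
    A ≤ algebraMap ℝ (Matrix n n ℝ) (⨆ i, hA.eigenvalues i) := by
  rw [le_algebraMap_iff_spectrum_le hA.isSelfAdjoint, hA.spectrum_real_eq_range_eigenvalues]
  rintro _ ⟨i, rfl⟩
  exact le_ciSup (Set.finite_range _).bddAbove i

lemma iInf_eigenvalues_mul_le_dotProduct_mulVec (hA : A.IsHermitian) (x : n → ℝ) :
    (⨅ i, hA.eigenvalues i) * (x ⬝ᵥ x) ≤ x ⬝ᵥ A *ᵥ x := by
  simpa only [dotProduct_algebraMap_mulVec] using
    dotProduct_mulVec_le_of_le hA.algebraMap_iInf_eigenvalues_le x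

lemma dotProduct_mulVec_le_iSup_eigenvalues_mul (hA : A.IsHermitian) (x : n → ℝ) :
    x ⬝ᵥ A *ᵥ x ≤ (⨆ i, hA.eigenvalues i) * (x ⬝ᵥ x) := by
  simpa only [dotProduct_algebraMap_mulVec] using
    dotProduct_mulVec_le_of_le hA.le_algebraMap_iSup_eigenvalues x

end IsHermitian

end Matrix

lemma Finset.sum_range_pow_natAbs_natCast_sub {R : Type*} [Monoid R] [AddCommMonoid R] (b : R) (N : ℕ) :
    ∑ j ∈ range N, b ^ ((N : ℤ) - j).natAbs = ∑ k ∈ range N, b ^ (k + 1) := by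
  rw [← sum_range_reflect]
  refine sum_congr rfl fun j hj => ?_
  rw [mem_range] at hj
  congr 1
  omega

lemma one_sub_sq_mul_sum_range_pow_natAbs_sub {R : Type*} [CommRing R] (b : R) (N : ℕ) :
    (1 - b) ^ 2 * ∑ i ∈ range N, ∑ j ∈ range N, b ^ ((i : ℤ) - j).natAbs =
      N * (1 - b ^ 2) - 2 * b * (1 - b ^ N) := by
  induction N with
  | zero => simp
  | succ N ih =>
    have hcol : ∑ i ∈ range N, b ^ ((i : ℤ) - N).natAbs = ∑ k ∈ range N, b ^ (k + 1) := by
      simp_rw [← Int.natAbs_neg ((_ : ℤ) - N), neg_sub]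
      exact sum_range_pow_natAbs_natCast_sub b N
    have hgeom : (1 - b) * ∑ k ∈ range N, b ^ (k + 1) = b * (1 - b ^ N) := by
      simp_rw [pow_succ, ← sum_mul]
      linear_combination b * mul_neg_geom_sum b N
    -- the new last row and last column each sum to `∑ k < N, b^(k+1)`; the new corner is `1`
    simp only [sum_range_succ, sum_add_distrib, hcol, sum_range_pow_natAbs_natCast_sub,
      sub_self, Int.natAbs_zero, pow_zero]
    push_cast
    linear_combination ih + 2 * (1 - b) * hgeom

lemma one_dotProduct_expR_mulVec_one (N : ℕ) (b : ℝ) :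
    1 ⬝ᵥ expR N b *ᵥ 1 = ∑ i ∈ range N, ∑ j ∈ range N, b ^ ((i : ℤ) - j).natAbs := by
  simp only [dotProduct, mulVec, Pi.one_apply, one_mul, mul_one, expR]
  rw [Fin.sum_univ_eq_sum_range (fun i => ∑ j : Fin N, b ^ ((i : ℤ) - (j : ℕ)).natAbs)]
  exact sum_congr rfl fun i _ => Fin.sum_univ_eq_sum_range (fun j => b ^ ((i : ℤ) - j).natAbs) N

lemma neg_one_pow_mul_expR_mul_neg_one_pow (N : ℕ) (a : ℝ) (i j : Fin N) :
    (-1) ^ (i : ℕ) * expR N a i j * (-1) ^ (j : ℕ) = expR N (-a) i j := by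
  have hparity : (-1 : ℝ) ^ (i : ℕ) * (-1) ^ (j : ℕ) = (-1) ^ ((i : ℤ) - j).natAbs := by
    rw [← pow_add, neg_one_pow_eq_pow_mod_two, neg_one_pow_eq_pow_mod_two (R := ℝ) (Int.natAbs _)]
    congr 1
    omega
  rw [expR, expR, neg_pow a, ← hparity]
  ring

lemma neg_one_pow_dotProduct_expR_mulVec_neg_one_pow (N : ℕ) (a : ℝ) :
    (fun i : Fin N => (-1 : ℝ) ^ (i : ℕ)) ⬝ᵥ expR N a *ᵥ (fun i => (-1) ^ (i : ℕ)) =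
      1 ⬝ᵥ expR N (-a) *ᵥ 1 := by
  simp only [dotProduct, mulVec, mul_sum, Pi.one_apply, one_mul, mul_one,
    ← neg_one_pow_mul_expR_mul_neg_one_pow N a]
  ring_nf

lemma one_dotProduct_expR_mulVec_one_div {N : ℕ} (hN : (N : ℝ) ≠ 0) {b : ℝ} (hb : b ≠ 1) :
    (1 ⬝ᵥ expR N b *ᵥ 1) / N = (1 + b) / (1 - b) - 2 * b * (1 - b ^ N) / (N * (1 - b) ^ 2) := by
  have hb' : 1 - b ≠ 0 := sub_ne_zero.mpr hb.symm
  rw [one_dotProduct_expR_mulVec_one]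
  field_simp
  linear_combination one_sub_sq_mul_sum_range_pow_natAbs_sub b N

theorem stmt17 (N : ℕ) (hN : 1 < N) (a : ℝ) (ha0 : 0 ≤ a) (ha1 : a < 1)
    (hR : (expR N a).IsHermitian) :
    (1 + a) / (1 - a) - 2 * a * (1 - a ^ N) / (N * (1 - a) ^ 2) - (1 - a) / (1 + a) -
        2 * a * (1 - (-a) ^ N) / (N * (1 + a) ^ 2) ≤
      (⨆ i, hR.eigenvalues i) - ⨅ i, hR.eigenvalues i := by
  have hN0 : (0 : ℝ) < N := by exact_mod_cast (zero_lt_one.trans hN)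
  have hsq : ∀ v : Fin N → ℝ, (∀ i, v i * v i = 1) → v ⬝ᵥ v = N := fun v hv => by
    simp [dotProduct, hv]
  have hmax : (1 ⬝ᵥ expR N a *ᵥ 1) / N ≤ ⨆ i, hR.eigenvalues i := by
    rw [div_le_iff₀ hN0, ← hsq 1 fun _ => one_mul 1]
    exact hR.dotProduct_mulVec_le_iSup_eigenvalues_mul 1
  have hmin : (⨅ i, hR.eigenvalues i) ≤ (1 ⬝ᵥ expR N (-a) *ᵥ 1) / N := by
    rw [le_div_iff₀ hN0, ← neg_one_pow_dotProduct_expR_mulVec_neg_one_pow,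
      ← hsq (fun i => (-1) ^ (i : ℕ)) fun i => by simp [← mul_pow]]
    exact hR.iInf_eigenvalues_mul_le_dotProduct_mulVec _
  rw [one_dotProduct_expR_mulVec_one_div hN0.ne' ha1.ne] at hmax
  rw [one_dotProduct_expR_mulVec_one_div hN0.ne' (by linarith)] at hmin
  have hneg : (1 + -a) / (1 - -a) - 2 * -a * (1 - (-a) ^ N) / (N * (1 - -a) ^ 2) =
      (1 - a) / (1 + a) + 2 * a * (1 - (-a) ^ N) / (N * (1 + a) ^ 2) := by ring
  linarith
end

section
/- For 0 ≤ a < 1 and N > 1, the condition number κ(R) = λ_max(R)/λ_min(R) of the N × N matrix R with R[i,j] = a^|i-j| satisfies κ(R) ≤ (1+a)²(1 − a^(N−1))/(1−a)². -/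
open Matrix Finset

/-!
The largest eigenvalue is bounded by Gershgorin's theorem: every row sum of `R` is at most
`1 + 2a + ⋯ + 2a^(N-2) + a^(N-1) = (1 + a)(1 - a^(N-1))/(1 - a)`.
For the smallest one, put `u j = ∑_{i ≤ j} a^(j-i) x i`, so that `x j = u j - a u (j-1)`.
Then `xᵀ R x = (1 - a²) ∑ u j² + a² u (N-1)²` and `∑ x j² ≤ (1 + a)² ∑ u j²`,
hence `xᵀ R x ≥ (1 - a)/(1 + a) ‖x‖²`; the Rayleigh quotient of a unit eigenvector does the rest.
-/

lemma sum_range_succ_quadForm {R : Type*} [CommRing R] (K : ℕ → ℕ → R)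
    (hK : ∀ i k, K i k = K k i) (x : ℕ → R) (n : ℕ) :
    ∑ i ∈ range (n + 1), ∑ k ∈ range (n + 1), K i k * (x i * x k) =
      ∑ i ∈ range n, ∑ k ∈ range n, K i k * (x i * x k)
        + 2 * x n * ∑ i ∈ range n, K i n * x i + K n n * x n ^ 2 := by
  have hrow : ∑ k ∈ range n, K n k * (x n * x k) = ∑ i ∈ range n, K i n * (x i * x n) :=
    sum_congr rfl fun i _ => by rw [hK, mul_comm (x n)]
  have hcol : ∑ i ∈ range n, K i n * (x i * x n) = x n * ∑ i ∈ range n, K i n * x i := by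
    rw [mul_sum]
    exact sum_congr rfl fun i _ => by ring
  simp only [sum_range_succ, sum_add_distrib, hrow, hcol]
  ring

namespace Matrix.IsHermitian

variable {n : Type*} [Fintype n] [DecidableEq n] {A : Matrix n n ℝ}

lemma eigenvalues_le_of_sum_abs_le (hA : A.IsHermitian) {c : ℝ}
    (hrow : ∀ k, ∑ j, |A k j| ≤ c) (i : n) : hA.eigenvalues i ≤ c := by
  have hμ : Module.End.HasEigenvalue (toLin' A) (hA.eigenvalues i) := by
    rw [Module.End.hasEigenvalue_iff_mem_spectrum, spectrum_toLin']
    exact hA.eigenvalues_mem_spectrum_real i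
  obtain ⟨k, hk⟩ := eigenvalue_mem_ball hμ
  rw [Metric.mem_closedBall, Real.dist_eq] at hk
  simp only [Real.norm_eq_abs] at hk
  calc hA.eigenvalues i ≤ |A k k| + ∑ j ∈ univ.erase k, |A k j| := by
        linarith [le_abs_self (hA.eigenvalues i - A k k), le_abs_self (A k k)]
    _ = ∑ j, |A k j| := add_sum_erase _ (fun j => |A k j|) (mem_univ k)
    _ ≤ c := hrow k

lemma exists_eigenvalue_eq_quadForm (hA : A.IsHermitian) (i : n) :
    ∃ v : n → ℝ, ∑ j, v j ^ 2 = 1 ∧ hA.eigenvalues i = ∑ j, ∑ k, A j k * (v j * v k) := by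
  refine ⟨hA.eigenvectorBasis i, ?_, ?_⟩
  · rw [← EuclideanSpace.real_norm_sq_eq, hA.eigenvectorBasis.orthonormal.1 i, one_pow]
  · rw [hA.eigenvalues_eq i]
    simp only [RCLike.re_to_real, dotProduct, mulVec, star_trivial, mul_sum]
    exact sum_congr rfl fun j _ => sum_congr rfl fun k _ => by ring

end Matrix.IsHermitian

namespace ExpCorrelation

noncomputable def expQuadForm (a : ℝ) (x : ℕ → ℝ) (n : ℕ) : ℝ :=
  ∑ i ∈ range n, ∑ k ∈ range n, a ^ ((i : ℤ) - k).natAbs * (x i * x k)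

noncomputable def geomConv (a : ℝ) (x : ℕ → ℝ) (j : ℕ) : ℝ :=
  ∑ i ∈ range (j + 1), a ^ (j - i) * x i

variable {a : ℝ}

lemma geomConv_zero (x : ℕ → ℝ) : geomConv a x 0 = x 0 := by
  simp [geomConv]

lemma geomConv_succ (x : ℕ → ℝ) (j : ℕ) :
    geomConv a x (j + 1) = x (j + 1) + a * geomConv a x j := by
  rw [geomConv, sum_range_succ, geomConv, mul_sum, Nat.sub_self, pow_zero, one_mul, add_comm]
  congr 1
  refine sum_congr rfl fun i hi => ?_
  rw [Nat.sub_add_comm (Nat.le_of_lt_succ (mem_range.1 hi)), pow_succ]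
  ring

lemma sum_pow_natAbs_sub_succ_mul (x : ℕ → ℝ) (n : ℕ) :
    ∑ i ∈ range (n + 1), a ^ ((i : ℤ) - (n + 1 : ℕ)).natAbs * x i = a * geomConv a x n := by
  rw [geomConv, mul_sum]
  refine sum_congr rfl fun i hi => ?_
  have hdist : ((i : ℤ) - (n + 1 : ℕ)).natAbs = n - i + 1 := by
    have := mem_range.1 hi
    omega
  rw [hdist, pow_succ]
  ring

theorem expQuadForm_succ_eq (x : ℕ → ℝ) (n : ℕ) :
    expQuadForm a x (n + 1) =
      (1 - a ^ 2) * ∑ j ∈ range (n + 1), geomConv a x j ^ 2 + a ^ 2 * geomConv a x n ^ 2 := by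
  induction n with
  | zero => simp [expQuadForm, geomConv_zero]; ring
  | succ n ih =>
    rw [expQuadForm, sum_range_succ_quadForm _ (fun i k => by rw [← Int.natAbs_neg, neg_sub]),
      ← expQuadForm, ih, sum_pow_natAbs_sub_succ_mul, sum_range_succ _ (n + 1), geomConv_succ]
    simp only [sub_self, Int.natAbs_zero, pow_zero]
    ring

lemma sum_sq_add_le_sum_geomConv_sq (ha : 0 ≤ a) (x : ℕ → ℝ) (n : ℕ) :
    ∑ j ∈ range (n + 1), x j ^ 2 + (a + a ^ 2) * geomConv a x n ^ 2 ≤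
      (1 + a) ^ 2 * ∑ j ∈ range (n + 1), geomConv a x j ^ 2 := by
  induction n with
  | zero =>
    simp only [zero_add, sum_range_one, geomConv_zero]
    nlinarith [sq_nonneg (x 0)]
  | succ n ih =>
    have hx : x (n + 1) = geomConv a x (n + 1) - a * geomConv a x n := by
      rw [geomConv_succ]
      ring
    rw [sum_range_succ _ (n + 1), sum_range_succ (fun j => geomConv a x j ^ 2) (n + 1), hx]
    nlinarith [mul_nonneg ha (sq_nonneg (geomConv a x (n + 1) + geomConv a x n))]

theorem le_expQuadForm (ha0 : 0 ≤ a) (ha1 : a < 1) (x : ℕ → ℝ) (n : ℕ) :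
    (1 - a) / (1 + a) * ∑ j ∈ range (n + 1), x j ^ 2 ≤ expQuadForm a x (n + 1) := by
  rw [expQuadForm_succ_eq, div_mul_eq_mul_div, div_le_iff₀ (by linarith)]
  nlinarith [mul_le_mul_of_nonneg_left (sum_sq_add_le_sum_geomConv_sq ha0 x n)
    (by linarith : (0 : ℝ) ≤ 1 - a), mul_nonneg ha0 (sq_nonneg (geomConv a x n)),
    mul_nonneg (mul_nonneg ha0 ha0) (sq_nonneg (geomConv a x n))]

lemma sum_range_pow_natAbs_sub_le (ha : 0 ≤ a) {n i : ℕ} (hn : 0 < n) (hi : i ≤ n) :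
    ∑ k ∈ range (n + 1), a ^ ((i : ℤ) - k).natAbs ≤ (1 + a) * ∑ d ∈ range n, a ^ d := by
  have hleft : ∑ k ∈ range (i + 1), a ^ ((i : ℤ) - k).natAbs = ∑ d ∈ range (i + 1), a ^ d := by
    rw [← sum_range_reflect]
    refine sum_congr rfl fun k hk => ?_
    have := mem_range.1 hk
    congr 1
    omega
  have hright : ∑ k ∈ Ico (i + 1) (n + 1), a ^ ((i : ℤ) - k).natAbs =
      a * ∑ d ∈ range (n - i), a ^ d := by
    rw [sum_Ico_eq_sum_range, Nat.add_sub_add_right, mul_sum]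
    refine sum_congr rfl fun d _ => ?_
    rw [← pow_succ']
    congr 1
    omega
  rw [← sum_range_add_sum_Ico _ (by omega : i + 1 ≤ n + 1), hleft, hright, add_mul, one_mul]
  rcases hi.lt_or_eq with hi | rfl
  · gcongr <;> omega
  · -- the last row: its extra term `a ^ n` is absorbed by `a * a ^ (n - 1)`
    obtain ⟨m, rfl⟩ : ∃ m, i = m + 1 := ⟨i - 1, by omega⟩
    rw [sum_range_succ, Nat.sub_self, sum_range_zero, mul_zero, add_zero, pow_succ',
      add_le_add_iff_left]
    exact mul_le_mul_of_nonneg_left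
      (single_le_sum (fun d _ => pow_nonneg ha d) (self_mem_range_succ m)) ha

lemma expR_eigenvalues_le (ha : 0 ≤ a) {n : ℕ} (hn : 0 < n) (hR : (expR (n + 1) a).IsHermitian)
    (i : Fin (n + 1)) : hR.eigenvalues i ≤ (1 + a) * ∑ d ∈ range n, a ^ d := by
  refine hR.eigenvalues_le_of_sum_abs_le (fun k => ?_) i
  simp only [expR, abs_pow, abs_of_nonneg ha]
  rw [Fin.sum_univ_eq_sum_range (fun j => a ^ ((k : ℤ) - j).natAbs)]
  exact sum_range_pow_natAbs_sub_le ha hn (Nat.le_of_lt_succ k.isLt)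

lemma le_expR_eigenvalues (ha0 : 0 ≤ a) (ha1 : a < 1) {n : ℕ}
    (hR : (expR (n + 1) a).IsHermitian) (i : Fin (n + 1)) :
    (1 - a) / (1 + a) ≤ hR.eigenvalues i := by
  obtain ⟨v, hv, heig⟩ := hR.exists_eigenvalue_eq_quadForm i
  set x : ℕ → ℝ := fun m => v (Fin.ofNat (n + 1) m)
  have hxv : ∀ j : Fin (n + 1), x j = v j := fun j => congrArg v (Fin.ofNat_val_eq_self j)
  have hnorm : ∑ j ∈ range (n + 1), x j ^ 2 = 1 := by
    rw [← Fin.sum_univ_eq_sum_range (fun j => x j ^ 2)]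
    simpa only [hxv] using hv
  have hquad : hR.eigenvalues i = expQuadForm a x (n + 1) := by
    rw [heig, expQuadForm, ← Fin.sum_univ_eq_sum_range]
    refine sum_congr rfl fun j _ => ?_
    rw [← Fin.sum_univ_eq_sum_range]
    simp only [expR, hxv]
  simpa only [hnorm, hquad, mul_one] using le_expQuadForm ha0 ha1 x n

end ExpCorrelation

open ExpCorrelation in
theorem stmt18 (N : ℕ) (hN : 1 < N) (a : ℝ) (ha0 : 0 ≤ a) (ha1 : a < 1)
    (hR : (expR N a).IsHermitian) :
    (⨆ i, hR.eigenvalues i) / (⨅ i, hR.eigenvalues i) ≤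
      (1 + a) ^ 2 * (1 - a ^ (N - 1)) / (1 - a) ^ 2 := by
  obtain ⟨n, rfl⟩ : ∃ n, N = n + 1 := ⟨N - 1, by omega⟩
  have hL : 0 < (1 - a) / (1 + a) := div_pos (by linarith) (by linarith)
  have hsup : (⨆ i, hR.eigenvalues i) ≤ (1 + a) * ∑ d ∈ range n, a ^ d :=
    ciSup_le (expR_eigenvalues_le ha0 (by omega) hR)
  have hinf : (1 - a) / (1 + a) ≤ ⨅ i, hR.eigenvalues i :=
    le_ciInf (le_expR_eigenvalues ha0 ha1 hR)
  have hU : 0 ≤ (1 + a) * ∑ d ∈ range n, a ^ d :=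
    mul_nonneg (by linarith) (sum_nonneg fun d _ => pow_nonneg ha0 d)
  calc _ ≤ (1 + a) * (∑ d ∈ range n, a ^ d) / ((1 - a) / (1 + a)) :=
        div_le_div₀ hU hsup hL hinf
    _ = _ := by
      rw [Nat.add_sub_cancel, ← geom_sum_mul_neg]
      generalize ∑ d ∈ range n, a ^ d = G
      field_simp
end
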